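/- Combined translation correctness: for every I/O-guarded event system G and state s, traces(G, s) = tracesH(emb(proc(G, s))), i.e., the event system, its process translation, and the derived separation-logic I/O specification all have exactly the same trace sets. -/

import Mathlib

/-!
The translation `procOf e G s` offers, through a countable choice, exactly the actions
`bio(v, w)` whose guard holds in `s` and then continues as `procOf e G (U s)`, so the event
system and the process simulate each other step by step.

A heap satisfying `emb(P)` follows every step of `P`: it holds a permission for that action,
either with the same input (a `bio` step) or with a different one (a step to the chaotic
state ⊥). Conversely, a trace executable in every model of `emb(P)` runs in the canonical model
whose input schedule answers each prefix of the trace with the input the trace records. Its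
permissions sit at pairwise distinct places of the choice tree of `P`, so each heap step consumes
the permission of a prefix reachable through choices (a process step), the schedule rules out
the contradict rule, and the permissions of the branches not taken become unreachable.
-/

/-! ## Event systems -/

/-- Event systems: labeled transition systems. -/
structure ES (S E : Type) where
  trans : S → E → S → Prop

namespace ES

/-- Extension of the transition relation to finite sequences of events. -/
inductive mtrans {S E : Type} (M : ES S E) : S → List E → S → Prop
  | nil (s : S) : mtrans M s [] s
  | snoc {s s' s'' : S} {τ : List E} {e : E} :
      mtrans M s τ s' → M.trans s' e s'' → mtrans M s (τ ++ [e]) s''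

/-- The traces of an event system starting from a set of initial states. -/
def traces {S E : Type} (M : ES S E) (I : Set S) : Set (List E) :=
  {τ | ∃ s ∈ I, ∃ s', M.mtrans s τ s'}

/-- Traces starting from a single state. -/
def tracesFrom {S E : Type} (M : ES S E) (s : S) : Set (List E) :=
  M.traces {s}

end ES

/-! ## Chunks and heaps -/

/-- Chunks: I/O permissions `bio(t, v, w, t')` and tokens `token(t)`. -/
inductive Chunk (B V Pl : Type) : Type
  | bio (b : B) (t : Pl) (v w : V) (t' : Pl)
  | token (t : Pl)

/-- Heaps are (possibly infinite) multisets of chunks, i.e. functions to `ℕ∞`. -/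
abbrev Heap (B V Pl : Type) := Chunk B V Pl → ℕ∞

open Classical in
/-- The singleton heap containing one chunk. -/
noncomputable def Heap.single {B V Pl : Type} (c : Chunk B V Pl) : Heap B V Pl :=
  fun c' => if c' = c then 1 else 0

/-- Well-typedness of a chunk w.r.t. a typing function `Ty`. -/
def Chunk.wellTyped {B V Pl : Type} (Ty : B → V → Set V) : Chunk B V Pl → Prop
  | .bio b _ v w _ => w ∈ Ty b v
  | .token _ => True

/-! ## Assertions (coinductive, as an M-type) -/

/-- Heads of the assertion functor. -/
inductive AssnHead (B V Pl : Type) : Type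
  | bool (b : Bool)
  | chunk (c : Chunk B V Pl)
  | star
  | exv
  | expl

/-- Arities (branching types) of the assertion functor. -/
def AssnAr (B V Pl : Type) : AssnHead B V Pl → Type
  | .bool _ => Empty
  | .chunk _ => Empty
  | .star => Bool
  | .exv => V
  | .expl => Pl

/-- The assertion polynomial functor. -/
def AssnF (B V Pl : Type) : PFunctor := ⟨AssnHead B V Pl, AssnAr B V Pl⟩

/-- Coinductive separation logic assertions:
`φ ::=ν b | c | φ₁ ⋆ φ₂ | ∃v. φ | ∃t. φ`. -/
def Assn (B V Pl : Type) : Type := (AssnF B V Pl).M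

namespace Assn

variable {B V Pl : Type}

/-- Boolean assertion. -/
def mkBool (b : Bool) : Assn B V Pl := PFunctor.M.mk ⟨.bool b, fun e => e.elim⟩

/-- Chunk assertion. -/
def mkChunk (c : Chunk B V Pl) : Assn B V Pl := PFunctor.M.mk ⟨.chunk c, fun e => e.elim⟩

/-- Separating conjunction. -/
def star (φ ψ : Assn B V Pl) : Assn B V Pl :=
  PFunctor.M.mk ⟨.star, fun x : Bool => if x then φ else ψ⟩

/-- Existential quantification over values. -/
def exv (f : V → Assn B V Pl) : Assn B V Pl := PFunctor.M.mk ⟨.exv, f⟩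

/-- Existential quantification over places. -/
def expl (f : Pl → Assn B V Pl) : Assn B V Pl := PFunctor.M.mk ⟨.expl, f⟩

end Assn

/-- One step of the satisfaction relation. -/
def SatF {B V Pl : Type} (Ty : B → V → Set V)
    (R : Heap B V Pl → Assn B V Pl → Prop) (h : Heap B V Pl) (φ : Assn B V Pl) : Prop :=
  match PFunctor.M.dest φ with
  | ⟨.bool b, _⟩ => b = true
  | ⟨.chunk c, _⟩ => 0 < h c ∧ c.wellTyped Ty
  | ⟨.star, f⟩ => ∃ h1 h2, h = h1 + h2 ∧ R h1 (f true) ∧ R h2 (f false)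
  | ⟨.exv, f⟩ => ∃ v, R h (f v)
  | ⟨.expl, f⟩ => ∃ t, R h (f t)

/-- Coinductive satisfaction relation `h ⊨ φ`, as the greatest fixed point
of `SatF` (defined as the union of all post-fixed points). -/
def sat {B V Pl : Type} (Ty : B → V → Set V) (h : Heap B V Pl) (φ : Assn B V Pl) : Prop :=
  ∃ R, (∀ h' φ', R h' φ' → SatF Ty R h' φ') ∧ R h φ

/-! ## Heap transition system -/

/-- The heap transition system over `Option Heap` (`none` is the chaotic state ⊥),
with rules Bio, Contradict, and Chaos. -/
inductive HTrans {B V Pl : Type} (Ty : B → V → Set V) :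
    Option (Heap B V Pl) → B × V × V → Option (Heap B V Pl) → Prop
  | bio {b : B} {v w : V} {t t' : Pl} {h : Heap B V Pl} :
      w ∈ Ty b v →
      HTrans Ty (some (Heap.single (.token t) + Heap.single (.bio b t v w t') + h)) (b, v, w)
        (some (Heap.single (.token t') + h))
  | contradict {b : B} {v w w' : V} {t t' : Pl} {h : Heap B V Pl} :
      w ≠ w' → w ∈ Ty b v → w' ∈ Ty b v →
      HTrans Ty (some (Heap.single (.token t) + Heap.single (.bio b t v w t') + h)) (b, v, w')
        none
  | chaos {b : B} {v w : V} : w ∈ Ty b v → HTrans Ty none (b, v, w) none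

/-- The heap transition system as an event system. -/
def hES {B V Pl : Type} (Ty : B → V → Set V) : ES (Option (Heap B V Pl)) (B × V × V) :=
  ⟨HTrans Ty⟩

/-- Traces executable in all heaps of a set of heaps. -/
def tracesH {B V Pl : Type} (Ty : B → V → Set V) (H : Set (Heap B V Pl)) :
    Set (List (B × V × V)) :=
  {τ | ∀ h ∈ H, τ ∈ (hES Ty).tracesFrom (some h)}

/-- Traces of an assertion: traces executable in all its heap models. -/
def tracesHA {B V Pl : Type} (Ty : B → V → Set V) (φ : Assn B V Pl) :
    Set (List (B × V × V)) :=
  tracesH Ty {h | sat Ty h φ}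

/-! ## Processes (coinductive, as an M-type) -/

/-- Heads of the process functor. -/
inductive ProcHead (B V : Type) : Type
  | null
  | pre (b : B) (v : V)
  | choice

/-- Arities of the process functor. -/
def ProcAr (B V : Type) : ProcHead B V → Type
  | .null => Empty
  | .pre _ _ => V
  | .choice => Bool

/-- The process polynomial functor. -/
def ProcF (B V : Type) : PFunctor := ⟨ProcHead B V, ProcAr B V⟩

/-- Coinductive processes: `P ::=ν Null | bio(v, z).P | P₁ ⊕ P₂`. -/
def Proc (B V : Type) : Type := (ProcF B V).M

namespace Proc

variable {B V : Type}

/-- The inactive process. -/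
def null : Proc B V := PFunctor.M.mk ⟨.null, fun e => e.elim⟩

/-- Prefixing with an I/O operation, binding the input in the continuation. -/
def pre (b : B) (v : V) (k : V → Proc B V) : Proc B V := PFunctor.M.mk ⟨.pre b v, k⟩

/-- Binary choice. -/
def choice (P Q : Proc B V) : Proc B V :=
  PFunctor.M.mk ⟨.choice, fun x : Bool => if x then P else Q⟩

end Proc

/-- Operational semantics of processes (rules Pref and Choice). -/
inductive PTrans {B V : Type} (Ty : B → V → Set V) : Proc B V → B × V × V → Proc B V → Prop
  | pref {P : Proc B V} {b : B} {v w : V} {k : V → Proc B V} :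
      w ∈ Ty b v → PFunctor.M.dest P = ⟨.pre b v, k⟩ → PTrans Ty P (b, v, w) (k w)
  | chl {P P' : Proc B V} {a : B × V × V} {f : Bool → Proc B V} :
      PFunctor.M.dest P = ⟨.choice, f⟩ → PTrans Ty (f true) a P' → PTrans Ty P a P'
  | chr {P P' : Proc B V} {a : B × V × V} {f : Bool → Proc B V} :
      PFunctor.M.dest P = ⟨.choice, f⟩ → PTrans Ty (f false) a P' → PTrans Ty P a P'

/-- The process operational semantics as an event system. -/
def pES {B V : Type} (Ty : B → V → Set V) : ES (Proc B V) (B × V × V) := ⟨PTrans Ty⟩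

/-- Countable (ℕ-indexed) choice, defined corecursively from binary choice. -/
def vchoice {B V : Type} (f : ℕ → Proc B V) : Proc B V :=
  PFunctor.M.corec
    (fun s : Proc B V ⊕ ℕ =>
      match s with
      | .inl p => ⟨(PFunctor.M.dest p).1, fun x => Sum.inl ((PFunctor.M.dest p).2 x)⟩
      | .inr n => ⟨.choice, fun x : Bool => if x then Sum.inl (f n) else Sum.inr (n + 1)⟩)
    (Sum.inr 0)

/-! ## Embedding of processes into assertions -/

/-- States of the corecursion defining the embedding `emb`. -/
inductive EmbSt (B V Pl : Type) : Type
  | proc (P : Proc B V) (t : Pl)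
  | ex1 (b : B) (v : V) (k : V → Proc B V) (t t' : Pl)
  | star1 (b : B) (v : V) (k : V → Proc B V) (t t' : Pl) (z : V)
  | leafChunk (c : Chunk B V Pl)

/-- One step of the corecursion defining the embedding `emb`. -/
def embStep {B V Pl : Type} : EmbSt B V Pl → (AssnF B V Pl).Obj (EmbSt B V Pl)
  | .proc P t =>
    match PFunctor.M.dest P with
    | ⟨.null, _⟩ => ⟨.bool true, fun e => e.elim⟩
    | ⟨.pre b v, k⟩ => ⟨.expl, fun t' => .ex1 b v k t t'⟩
    | ⟨.choice, f⟩ => ⟨.star, fun x : Bool => .proc (f x) t⟩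
  | .ex1 b v k t t' => ⟨.exv, fun z => .star1 b v k t t' z⟩
  | .star1 b v k t t' z =>
      ⟨.star, fun x : Bool => if x then .leafChunk (.bio b t v z t') else .proc (k z) t'⟩
  | .leafChunk c => ⟨.chunk c, fun e => e.elim⟩

/-- The embedding `emb(P, t)` of a process and a place into an assertion:
`emb(Null, t) = true`, `emb(bio(v,z).P, t) = ∃t',z'. bio(t,v,z',t') ⋆ emb(P[z'/z], t')`,
`emb(P₁ ⊕ P₂, t) = emb(P₁, t) ⋆ emb(P₂, t)`. -/
def embA {B V Pl : Type} (P : Proc B V) (t : Pl) : Assn B V Pl :=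
  PFunctor.M.corec embStep (.proc P t)

/-- The process assertion `emb(P) = ∃t. token(t) ⋆ emb(P, t)`. -/
def procAssn {B V : Type} (Pl : Type) (P : Proc B V) : Assn B V Pl :=
  Assn.expl (fun t => Assn.star (Assn.mkChunk (.token t)) (embA P t))

/-- ℕ-indexed iterated separating conjunction, defined corecursively. -/
def AllStar {B V Pl : Type} (f : ℕ → Assn B V Pl) : Assn B V Pl :=
  PFunctor.M.corec
    (fun s : Assn B V Pl ⊕ ℕ =>
      match s with
      | .inl a => ⟨(PFunctor.M.dest a).1, fun x => Sum.inl ((PFunctor.M.dest a).2 x)⟩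
      | .inr n => ⟨.star, fun x : Bool => if x then Sum.inl (f n) else Sum.inr (n + 1)⟩)
    (Sum.inr 0)

/-! ## I/O-guarded event systems and their translation to processes -/

/-- An I/O-guarded event system: guards depend only on the state and the output,
updates compute the next state from output and input. -/
structure IOGES (B V S : Type) where
  guard : B → V → S → Prop
  update : B → V → V → S → S

/-- The event system associated with an I/O-guarded event system:
`s →bio(v,w) s'` iff the guard holds, `w ∈ Ty(bio, v)`, and `s' = U(s)`. -/
def IOGES.es {B V S : Type} (G : IOGES B V S) (Ty : B → V → Set V) : ES S (B × V × V) :=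
  ⟨fun s a s' => G.guard a.1 a.2.1 s ∧ a.2.2 ∈ Ty a.1 a.2.1 ∧
      s' = G.update a.1 a.2.1 a.2.2 s⟩

/-- States of the corecursion defining `proc(G, s)`. -/
inductive PrSt (S : Type) : Type
  | spine (n : ℕ) (s : S)
  | item (n : ℕ) (s : S)

open Classical in
/-- The corecursive translation `proc(G, s)` of an I/O-guarded event system into
a process: the countable choice over all `bio ∈ Bios` and outputs `v` whose guard
holds in `s` of the prefixed processes `bio(v, z). proc(G, U_{bio(v,z)}(s))`,
via an enumeration `e` of the pairs `(bio, v)`. -/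
noncomputable def procOf {B V S : Type} (e : ℕ → B × V) (G : IOGES B V S) (s : S) :
    Proc B V :=
  PFunctor.M.corec
    (fun st : PrSt S =>
      match st with
      | .spine n s => ⟨.choice, fun x : Bool => if x then .item n s else .spine (n + 1) s⟩
      | .item n s =>
          if G.guard (e n).1 (e n).2 s then
            ⟨.pre (e n).1 (e n).2, fun w => .spine 0 (G.update (e n).1 (e n).2 w s)⟩
          else ⟨.null, fun x => x.elim⟩)
    (.spine 0 s)

/-! ## Canonical heap models -/

open Classical in
/-- The I/O permission (as a singleton heap, or the empty heap) found at position
`pos` of process `P` under input schedule `ρ`, with previous place `pp`,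
current position `cp`, and traversed trace `τ`. -/
noncomputable def pm {B V : Type} (ρ : List (B × V × V) → B → V → V) :
    Proc B V → List (B × V × V) → List Bool → List Bool → List Bool →
      Heap B V (List Bool)
  | P, τ, pp, cp, [] =>
    (match PFunctor.M.dest P with
     | ⟨.pre b v, _⟩ => Heap.single (Chunk.bio b pp v (ρ τ b v) (cp ++ [true]))
     | _ => 0)
  | P, τ, pp, cp, d :: pos =>
    (match PFunctor.M.dest P, d with
     | ⟨.pre b v, k⟩, true =>
         pm ρ (k (ρ τ b v)) (τ ++ [(b, v, ρ τ b v)]) (cp ++ [true]) (cp ++ [true]) pos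
     | ⟨.choice, f⟩, d' => pm ρ (f d') τ pp (cp ++ [d']) pos
     | _, _ => 0)

/-- Pointwise (possibly infinite) sum of a family of heaps. -/
noncomputable def hSum {B V Pl ι : Type} (f : ι → Heap B V Pl) : Heap B V Pl :=
  fun c => ⨆ F : Finset ι, ∑ i ∈ F, f i c

/-- The canonical model construction `gmod(P, ρ, τ, ppos, cpos)`: the multiset
sum of `pm(P, ρ, τ, ppos, cpos, pos)` over all positions `pos`. -/
noncomputable def gmod {B V : Type} (ρ : List (B × V × V) → B → V → V)
    (P : Proc B V) (τ : List (B × V × V)) (pp cp : List Bool) :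
    Heap B V (List Bool) :=
  hSum (fun pos : List Bool => pm ρ P τ pp cp pos)

/-- Well-typedness of an input schedule. -/
def schedWT {B V : Type} (Ty : B → V → Set V) (ρ : List (B × V × V) → B → V → V) : Prop :=
  ∀ τ b v, ρ τ b v ∈ Ty b v

/-- The canonical model `cmod(P, ρ) = gmod(P, ρ, [], [], [])`. -/
noncomputable def cmod {B V : Type} (ρ : List (B × V × V) → B → V → V) (P : Proc B V) :
    Heap B V (List Bool) :=
  gmod ρ P [] [] []

/-- The canonical model with a token added at the previous place. -/
noncomputable def gmodTok {B V : Type} (ρ : List (B × V × V) → B → V → V)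
    (P : Proc B V) (τ : List (B × V × V)) (pp cp : List Bool) :
    Heap B V (List Bool) :=
  Heap.single (Chunk.token pp) + gmod ρ P τ pp cp

/-- The set `can(P)` of token-added canonical models over all well-typed schedules. -/
def canSet {B V : Type} (Ty : B → V → Set V) (P : Proc B V) :
    Set (Heap B V (List Bool)) :=
  {h | ∃ ρ, schedWT Ty ρ ∧ h = Heap.single (Chunk.token []) + cmod ρ P}

/-- The set of source places of I/O permissions in a heap. -/
def srcplaces {B V Pl : Type} (h : Heap B V Pl) : Set Pl :=
  {t | ∃ b v w t', 0 < h (Chunk.bio b t v w t')}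

/-- A heap is dead for a position if it has no tokens and no source place
extending the position. -/
def deadFor {B V : Type} (pos : List Bool) (h : Heap B V (List Bool)) : Prop :=
  (∀ t, h (Chunk.token t) = 0) ∧ ∀ p' ∈ srcplaces h, ¬ pos <+: p'

open Classical in
/-- The witness schedule `ρwit(σ)`: for proper prefixes `τ` of `σ`, return the
input of the next matching action of `σ`; otherwise an arbitrary well-typed value
(given by `pick`). -/
noncomputable def rhoWit {B V : Type} (pick : B → V → V) (σ : List (B × V × V)) :
    List (B × V × V) → B → V → V :=
  fun τ b v =>
    if h : ∃ w, ∃ rest, τ <+: σ ∧ σ.drop τ.length = (b, v, w) :: rest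
    then h.choose
    else pick b v


namespace ES

variable {S T E : Type} {M : ES S E}

theorem mtrans_cons {s s' s'' : S} {e : E} {τ : List E}
    (h₁ : M.trans s e s') (h₂ : M.mtrans s' τ s'') : M.mtrans s (e :: τ) s'' := by
  induction h₂ with
  | nil => simpa using mtrans.snoc (mtrans.nil s) h₁
  | snoc _ ht ih => simpa using mtrans.snoc ih ht

theorem eq_of_mtrans_nil {s s' : S} (h : M.mtrans s [] s') : s = s' := by
  generalize hτ : ([] : List E) = τ at h
  induction h with
  | nil => rfl
  | snoc => simp at hτ

theorem mtrans_cons_iff {s s'' : S} {e : E} {τ : List E} :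
    M.mtrans s (e :: τ) s'' ↔ ∃ s', M.trans s e s' ∧ M.mtrans s' τ s'' := by
  refine ⟨fun h => ?_, fun ⟨_, h₁, h₂⟩ => mtrans_cons h₁ h₂⟩
  generalize hτ' : e :: τ = τ' at h
  induction h generalizing τ with
  | nil => cases hτ'
  | @snoc _ s₂ τ₀ e₀ h₁ h₂ ih =>
    cases τ₀ with
    | nil =>
      obtain ⟨rfl, rfl⟩ : e = e₀ ∧ τ = [] := by simpa using hτ'
      exact ⟨s₂, eq_of_mtrans_nil h₁ ▸ h₂, mtrans.nil s₂⟩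
    | cons e₁ τ₁ =>
      obtain ⟨rfl, rfl⟩ : e = e₁ ∧ τ = τ₁ ++ [e₀] := by simpa using hτ'
      obtain ⟨m, hm₁, hm₂⟩ := ih rfl
      exact ⟨m, hm₁, mtrans.snoc hm₂ h₂⟩

theorem mem_tracesFrom {s : S} {τ : List E} : τ ∈ M.tracesFrom s ↔ ∃ s', M.mtrans s τ s' := by
  simp [tracesFrom, traces]

theorem nil_mem_tracesFrom (s : S) : [] ∈ M.tracesFrom s :=
  mem_tracesFrom.2 ⟨s, mtrans.nil s⟩

theorem cons_mem_tracesFrom {s : S} {e : E} {τ : List E} :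
    e :: τ ∈ M.tracesFrom s ↔ ∃ s', M.trans s e s' ∧ τ ∈ M.tracesFrom s' := by
  simp only [mem_tracesFrom, mtrans_cons_iff]
  exact ⟨fun ⟨_, s', h, h'⟩ => ⟨s', h, _, h'⟩, fun ⟨s', h, _, h'⟩ => ⟨_, s', h, h'⟩⟩

theorem tracesFrom_subset_of_simulation {N : ES T E} (R : S → T → Prop)
    (hR : ∀ s t e s', R s t → M.trans s e s' → ∃ t', N.trans t e t' ∧ R s' t')
    {s : S} {t : T} (hst : R s t) : M.tracesFrom s ⊆ N.tracesFrom t := by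
  intro τ hτ
  induction τ generalizing s t with
  | nil => exact nil_mem_tracesFrom t
  | cons e τ ih =>
    obtain ⟨s', hs, hτ'⟩ := cons_mem_tracesFrom.1 hτ
    obtain ⟨t', ht, hst'⟩ := hR s t e s' hst hs
    exact cons_mem_tracesFrom.2 ⟨t', ht, ih hst' hτ'⟩

end ES

namespace Heap

variable {B V Pl : Type}

@[simp]
theorem single_apply_self (c : Chunk B V Pl) : Heap.single c c = 1 := by
  simp [Heap.single]

theorem single_apply_of_ne {c c' : Chunk B V Pl} (h : c' ≠ c) : Heap.single c c' = 0 := by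
  simp [Heap.single, h]

theorem single_apply_ne_top (c c' : Chunk B V Pl) : Heap.single c c' ≠ ⊤ := by
  unfold Heap.single
  split <;> simp

theorem exists_eq_single_add {h : Heap B V Pl} {c : Chunk B V Pl} (hc : 0 < h c) :
    ∃ h', h = Heap.single c + h' := by
  refine ⟨h - Heap.single c, funext fun c' => ?_⟩
  by_cases hc' : c' = c
  · subst hc'
    simpa using (add_tsub_cancel_of_le (Order.one_le_iff_pos.mpr hc)).symm
  · simp [single_apply_of_ne hc']

theorem single_add_single_add_left_cancel {c₁ c₂ : Chunk B V Pl} {h₁ h₂ : Heap B V Pl}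
    (h : Heap.single c₁ + Heap.single c₂ + h₁ = Heap.single c₁ + Heap.single c₂ + h₂) :
    h₁ = h₂ :=
  funext fun c => WithTop.add_left_cancel
    (WithTop.add_ne_top.2 ⟨single_apply_ne_top _ _, single_apply_ne_top _ _⟩) (congrFun h c)

end Heap

protected theorem ENat.hasSum {ι : Type} (f : ι → ℕ∞) : HasSum f (⨆ s : Finset ι, ∑ i ∈ s, f i) :=
  tendsto_atTop_iSup fun _ _ => Finset.sum_le_sum_of_subset

protected theorem ENat.summable {ι : Type} (f : ι → ℕ∞) : Summable f :=
  (ENat.hasSum f).summable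

section hSum

variable {B V Pl ι : Type}

theorem hSum_apply (f : ι → Heap B V Pl) (c : Chunk B V Pl) : hSum f c = ∑' i, f i c :=
  (ENat.hasSum _).tsum_eq.symm

theorem hSum_apply_eq_zero_iff {f : ι → Heap B V Pl} {c : Chunk B V Pl} :
    hSum f c = 0 ↔ ∀ i, f i c = 0 := by
  rw [hSum_apply, (ENat.summable _).tsum_eq_zero_iff]

theorem hSum_zero : hSum (fun _ : ι => (0 : Heap B V Pl)) = 0 :=
  funext fun _ => hSum_apply_eq_zero_iff.2 fun _ => rfl

theorem exists_pos_of_hSum_apply_pos {f : ι → Heap B V Pl} {c : Chunk B V Pl}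
    (h : 0 < hSum f c) : ∃ i, 0 < f i c := by
  simpa [pos_iff_ne_zero, hSum_apply_eq_zero_iff] using h

def listBoolEquiv : Unit ⊕ (List Bool ⊕ List Bool) ≃ List Bool where
  toFun
    | .inl _ => []
    | .inr (.inl l) => true :: l
    | .inr (.inr l) => false :: l
  invFun
    | [] => .inl ()
    | true :: l => .inr (.inl l)
    | false :: l => .inr (.inr l)
  left_inv := by rintro (⟨⟩ | l | l) <;> rfl
  right_inv := by rintro (_ | ⟨_ | _, l⟩) <;> rfl

theorem hSum_listBool (f : List Bool → Heap B V Pl) :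
    hSum f = f [] + (hSum (fun l => f (true :: l)) + hSum (fun l => f (false :: l))) := by
  funext c
  simp only [Pi.add_apply, hSum_apply]
  rw [← listBoolEquiv.tsum_eq, (ENat.summable _).tsum_sum (ENat.summable _),
    (ENat.summable _).tsum_sum (ENat.summable _), tsum_fintype, Fintype.sum_unique]
  rfl

end hSum

section Sat

variable {B V Pl : Type} {Ty : B → V → Set V}

theorem SatF.mono {R R' : Heap B V Pl → Assn B V Pl → Prop} (hRR' : ∀ h φ, R h φ → R' h φ)
    {h : Heap B V Pl} {φ : Assn B V Pl} (hR : SatF Ty R h φ) : SatF Ty R' h φ := by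
  unfold SatF at hR ⊢
  generalize PFunctor.M.dest φ = d at hR ⊢
  rcases d with ⟨_ | _ | _ | _ | _, f⟩
  · exact hR
  · exact hR
  · obtain ⟨h₁, h₂, rfl, r₁, r₂⟩ := hR
    exact ⟨h₁, h₂, rfl, hRR' _ _ r₁, hRR' _ _ r₂⟩
  · obtain ⟨v, r⟩ := hR
    exact ⟨v, hRR' _ _ r⟩
  · obtain ⟨t, r⟩ := hR
    exact ⟨t, hRR' _ _ r⟩

theorem sat.satF {h : Heap B V Pl} {φ : Assn B V Pl} (hφ : sat Ty h φ) :
    SatF Ty (sat Ty) h φ := by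
  obtain ⟨R, hpost, hR⟩ := hφ
  exact (hpost _ _ hR).mono fun _ _ hr => ⟨R, hpost, hr⟩

/-- A chunk assertion only asks for `0 < h c`. -/
theorem sat.add_right {h : Heap B V Pl} {φ : Assn B V Pl} (hφ : sat Ty h φ)
    (r : Heap B V Pl) : sat Ty (h + r) φ := by
  refine ⟨fun h φ => ∃ h₀ r, h = h₀ + r ∧ sat Ty h₀ φ, ?_, h, r, rfl, hφ⟩
  rintro _ φ ⟨h₀, r, rfl, hφ⟩
  have hF := hφ.satF
  unfold SatF at hF ⊢
  generalize PFunctor.M.dest φ = d at hF ⊢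
  rcases d with ⟨_ | _ | _ | _ | _, f⟩
  · exact hF
  · exact ⟨lt_of_lt_of_le hF.1 le_self_add, hF.2⟩
  · obtain ⟨h₁, h₂, rfl, s₁, s₂⟩ := hF
    exact ⟨h₁, h₂ + r, add_assoc _ _ _, ⟨h₁, 0, (add_zero _).symm, s₁⟩, ⟨h₂, r, rfl, s₂⟩⟩
  · obtain ⟨v, s⟩ := hF
    exact ⟨v, h₀, r, rfl, s⟩
  · obtain ⟨t, s⟩ := hF
    exact ⟨t, h₀, r, rfl, s⟩

end Sat

section Emb

variable {B V Pl : Type} {Ty : B → V → Set V}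

theorem dest_embA_null {P : Proc B V} {g : ProcAr B V .null → Proc B V} {t : Pl}
    (hd : PFunctor.M.dest P = ⟨.null, g⟩) :
    PFunctor.M.dest (embA (Pl := Pl) P t) = ⟨.bool true, fun e : Empty => e.elim⟩ := by
  rw [embA, PFunctor.M.dest_corec]
  simp only [embStep, hd]
  exact congrArg (Sigma.mk _) (funext fun e => e.elim)

theorem dest_embA_pre {P : Proc B V} {b : B} {v : V} {k : V → Proc B V} {t : Pl}
    (hd : PFunctor.M.dest P = ⟨.pre b v, k⟩) :
    PFunctor.M.dest (embA (Pl := Pl) P t)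
      = ⟨.expl, fun t' => PFunctor.M.corec embStep (EmbSt.ex1 b v k t t')⟩ := by
  rw [embA, PFunctor.M.dest_corec]
  simp only [embStep, hd]
  rfl

theorem dest_embA_choice {P : Proc B V} {f : Bool → Proc B V} {t : Pl}
    (hd : PFunctor.M.dest P = ⟨.choice, f⟩) :
    PFunctor.M.dest (embA (Pl := Pl) P t) = ⟨.star, fun d => embA (f d) t⟩ := by
  rw [embA, PFunctor.M.dest_corec]
  simp only [embStep, hd]
  rfl

theorem dest_corec_embStep_ex1 {b : B} {v : V} {k : V → Proc B V} {t t' : Pl} :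
    PFunctor.M.dest (PFunctor.M.corec embStep (EmbSt.ex1 b v k t t'))
      = ⟨.exv, fun z => PFunctor.M.corec embStep (EmbSt.star1 b v k t t' z)⟩ := by
  rw [PFunctor.M.dest_corec]
  rfl

theorem dest_corec_embStep_star1 {b : B} {v : V} {k : V → Proc B V} {t t' : Pl} {z : V} :
    PFunctor.M.dest (PFunctor.M.corec embStep (EmbSt.star1 b v k t t' z))
      = ⟨.star, fun d : Bool =>
          if d then PFunctor.M.corec embStep (EmbSt.leafChunk (.bio b t v z t'))
          else embA (k z) t'⟩ := by
  rw [PFunctor.M.dest_corec]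
  simp only [embStep]
  exact congrArg (Sigma.mk _) (funext fun d => by cases d <;> rfl)

theorem dest_corec_embStep_leafChunk {c : Chunk B V Pl} :
    PFunctor.M.dest (PFunctor.M.corec embStep (EmbSt.leafChunk c))
      = ⟨.chunk c, fun e : Empty => e.elim⟩ := by
  rw [PFunctor.M.dest_corec]
  simp only [embStep]
  exact congrArg (Sigma.mk _) (funext fun e => e.elim)

theorem dest_procAssn (P : Proc B V) :
    PFunctor.M.dest (procAssn Pl P)
      = ⟨.expl, fun t => Assn.star (Assn.mkChunk (.token t)) (embA P t)⟩ :=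
  PFunctor.M.dest_mk _

theorem dest_star (φ ψ : Assn B V Pl) :
    PFunctor.M.dest (Assn.star φ ψ) = ⟨.star, fun d : Bool => if d then φ else ψ⟩ :=
  PFunctor.M.dest_mk _

theorem dest_mkChunk (c : Chunk B V Pl) :
    PFunctor.M.dest (Assn.mkChunk c) = ⟨.chunk c, fun e : Empty => e.elim⟩ :=
  PFunctor.M.dest_mk _

variable {h : Heap B V Pl} {φ : Assn B V Pl}

theorem sat.exists_of_dest_expl {f : Pl → Assn B V Pl} (hφ : sat Ty h φ)
    (hd : PFunctor.M.dest φ = ⟨.expl, f⟩) : ∃ t, sat Ty h (f t) := by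
  have hF := hφ.satF
  unfold SatF at hF
  rwa [hd] at hF

theorem sat.exists_of_dest_exv {f : V → Assn B V Pl} (hφ : sat Ty h φ)
    (hd : PFunctor.M.dest φ = ⟨.exv, f⟩) : ∃ v, sat Ty h (f v) := by
  have hF := hφ.satF
  unfold SatF at hF
  rwa [hd] at hF

theorem sat.exists_of_dest_star {f : Bool → Assn B V Pl} (hφ : sat Ty h φ)
    (hd : PFunctor.M.dest φ = ⟨.star, f⟩) :
    ∃ h₁ h₂, h = h₁ + h₂ ∧ sat Ty h₁ (f true) ∧ sat Ty h₂ (f false) := by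
  have hF := hφ.satF
  unfold SatF at hF
  rwa [hd] at hF

theorem sat.chunk_of_dest_chunk {c : Chunk B V Pl} {f : Empty → Assn B V Pl}
    (hφ : sat Ty h φ) (hd : PFunctor.M.dest φ = ⟨.chunk c, f⟩) : 0 < h c ∧ c.wellTyped Ty := by
  have hF := hφ.satF
  unfold SatF at hF
  rwa [hd] at hF

theorem sat.exists_single_add {c : Chunk B V Pl} {f : Bool → Assn B V Pl} (hφ : sat Ty h φ)
    (hd : PFunctor.M.dest φ = ⟨.star, f⟩)
    (hc : PFunctor.M.dest (f true) = ⟨.chunk c, fun e : Empty => e.elim⟩) :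
    ∃ r, h = Heap.single c + r ∧ c.wellTyped Ty ∧ sat Ty r (f false) := by
  obtain ⟨h₁, h₂, rfl, hs₁, hs₂⟩ := hφ.exists_of_dest_star hd
  obtain ⟨hpos, hwt⟩ := hs₁.chunk_of_dest_chunk hc
  obtain ⟨r, rfl⟩ := Heap.exists_eq_single_add hpos
  exact ⟨h₂ + r, by abel, hwt, hs₂.add_right r⟩

theorem sat_embA_pre {P : Proc B V} {b : B} {v : V} {k : V → Proc B V} {t : Pl}
    (hd : PFunctor.M.dest P = ⟨.pre b v, k⟩) (hs : sat Ty h (embA P t)) :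
    ∃ t' z r, h = Heap.single (.bio b t v z t') + r ∧ z ∈ Ty b v ∧ sat Ty r (embA (k z) t') := by
  obtain ⟨t', hs⟩ := hs.exists_of_dest_expl (dest_embA_pre hd)
  obtain ⟨z, hs⟩ := hs.exists_of_dest_exv dest_corec_embStep_ex1
  obtain ⟨r, rfl, hz, hr⟩ :=
    hs.exists_single_add dest_corec_embStep_star1 dest_corec_embStep_leafChunk
  exact ⟨t', z, r, rfl, hz, hr⟩

theorem sat_embA_choice {P : Proc B V} {f : Bool → Proc B V} {t : Pl}
    (hd : PFunctor.M.dest P = ⟨.choice, f⟩) (hs : sat Ty h (embA P t)) (d : Bool) :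
    sat Ty h (embA (f d) t) := by
  obtain ⟨h₁, h₂, rfl, hs₁, hs₂⟩ := hs.exists_of_dest_star (dest_embA_choice hd)
  cases d
  · simpa only [add_comm h₁] using hs₂.add_right h₁
  · exact hs₁.add_right h₂

theorem sat_procAssn {P : Proc B V} (hs : sat Ty h (procAssn Pl P)) :
    ∃ t r, h = Heap.single (.token t) + r ∧ sat Ty r (embA P t) := by
  obtain ⟨t, hs⟩ := hs.exists_of_dest_expl (dest_procAssn P)
  obtain ⟨r, rfl, -, hr⟩ := hs.exists_single_add (dest_star _ _) (dest_mkChunk _)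
  exact ⟨t, r, rfl, hr⟩

end Emb

section PTrans

variable {B V : Type} {Ty : B → V → Set V} {P P' : Proc B V} {a : B × V × V}

theorem PTrans.not_of_dest_null {g : ProcAr B V .null → Proc B V}
    (hd : PFunctor.M.dest P = ⟨.null, g⟩) : ¬ PTrans Ty P a P' := by
  intro h
  cases h <;> cases congrArg Sigma.fst (hd.symm.trans ‹_›)

theorem PTrans.of_dest_pre {b : B} {v : V} {k : V → Proc B V}
    (hd : PFunctor.M.dest P = ⟨.pre b v, k⟩) (h : PTrans Ty P a P') :
    ∃ w, a = (b, v, w) ∧ w ∈ Ty b v ∧ P' = k w := by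
  cases h with
  | pref hw hd' =>
    rw [hd] at hd'
    obtain ⟨⟨⟩, ⟨⟩⟩ := Sigma.mk.inj_iff.1 hd'
    exact ⟨_, rfl, hw, rfl⟩
  | chl hd' => cases congrArg Sigma.fst (hd.symm.trans hd')
  | chr hd' => cases congrArg Sigma.fst (hd.symm.trans hd')

theorem PTrans.output_mem (h : PTrans Ty P a P') : a.2.2 ∈ Ty a.1 a.2.1 := by
  induction h with
  | pref hw => exact hw
  | chl _ _ ih => exact ih
  | chr _ _ ih => exact ih

inductive ChoicePath : Proc B V → List Bool → Proc B V → Prop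
  | nil (P : Proc B V) : ChoicePath P [] P
  | cons {P Q : Proc B V} {f : Bool → Proc B V} {d : Bool} {pos : List Bool} :
      PFunctor.M.dest P = ⟨.choice, f⟩ → ChoicePath (f d) pos Q → ChoicePath P (d :: pos) Q

theorem ChoicePath.ptrans {Q : Proc B V} {pos : List Bool} {b : B} {v w : V}
    {k : V → Proc B V} (hpath : ChoicePath P pos Q) (hQ : PFunctor.M.dest Q = ⟨.pre b v, k⟩)
    (hw : w ∈ Ty b v) : PTrans Ty P (b, v, w) (k w) := by
  induction hpath with
  | nil => exact PTrans.pref hw hQ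
  | @cons _ _ _ d _ hd _ ih =>
    cases d
    · exact PTrans.chr hd (ih hQ)
    · exact PTrans.chl hd (ih hQ)

end PTrans

section Soundness

variable {B V Pl : Type} {Ty : B → V → Set V}

theorem htrans_of_ptrans {P P' : Proc B V} {a : B × V × V} (hP : PTrans Ty P a P') {t : Pl}
    {h : Heap B V Pl} (hs : sat Ty h (embA P t)) :
    HTrans Ty (some (Heap.single (.token t) + h)) a none ∨
      ∃ t' h', HTrans Ty (some (Heap.single (.token t) + h)) a
        (some (Heap.single (.token t') + h')) ∧ sat Ty h' (embA P' t') := by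
  induction hP with
  | @pref P b v w k hw hd =>
    obtain ⟨t', z, r, rfl, hz, hr⟩ := sat_embA_pre hd hs
    rw [← add_assoc]
    by_cases hwz : z = w
    · subst hwz
      exact Or.inr ⟨t', r, HTrans.bio hw, hr⟩
    · exact Or.inl (HTrans.contradict hwz hz hw)
  | chl hd _ ih => exact ih (sat_embA_choice hd hs true)
  | chr hd _ ih => exact ih (sat_embA_choice hd hs false)

theorem pES_tracesFrom_subset_tracesHA (P : Proc B V) :
    (pES Ty).tracesFrom P ⊆ tracesHA Ty (procAssn Pl P) := by
  intro τ hτ h hs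
  obtain ⟨t, r, rfl, hr⟩ := sat_procAssn hs
  let R (P : Proc B V) (o : Option (Heap B V Pl)) : Prop :=
    o = none ∨ ∃ t h, o = some (Heap.single (.token t) + h) ∧ sat Ty h (embA P t)
  refine ES.tracesFrom_subset_of_simulation R ?_ (Or.inr ⟨t, r, rfl, hr⟩) hτ
  rintro P o ⟨b, v, w⟩ P' (rfl | ⟨t, h, rfl, hs⟩) hP
  · exact ⟨none, HTrans.chaos hP.output_mem, Or.inl rfl⟩
  · rcases htrans_of_ptrans hP hs with hstep | ⟨t', h', hstep, hs'⟩
    · exact ⟨none, hstep, Or.inl rfl⟩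
    · exact ⟨_, hstep, Or.inr ⟨t', h', rfl, hs'⟩⟩

end Soundness

section Dead

variable {B V : Type} {p p' : List Bool} {h h' : Heap B V (List Bool)}

theorem deadFor_zero (p : List Bool) : deadFor p (0 : Heap B V (List Bool)) :=
  ⟨fun _ => rfl, fun _ ⟨_, _, _, _, hpos⟩ => absurd hpos (lt_irrefl 0)⟩

theorem deadFor.add (hh : deadFor p h) (hh' : deadFor p h') : deadFor p (h + h') := by
  refine ⟨fun t => by simp [hh.1 t, hh'.1 t], fun s ⟨b, v, w, t', hpos⟩ => ?_⟩
  rcases add_pos_iff.1 hpos with hpos | hpos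
  · exact hh.2 s ⟨b, v, w, t', hpos⟩
  · exact hh'.2 s ⟨b, v, w, t', hpos⟩

theorem deadFor.of_prefix (hh : deadFor p h) (hp : p <+: p') : deadFor p' h :=
  ⟨hh.1, fun s hs hs' => hh.2 s hs (hp.trans hs')⟩

end Dead

section CanonicalModel

variable {B V : Type} {Ty : B → V → Set V} {ρ : List (B × V × V) → B → V → V} {P : Proc B V}
  {τ : List (B × V × V)} {pp cp : List Bool}

theorem gmod_eq_add (ρ : List (B × V × V) → B → V → V) (P : Proc B V) (τ : List (B × V × V))
    (pp cp : List Bool) :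
    gmod ρ P τ pp cp = pm ρ P τ pp cp []
      + (hSum (fun pos => pm ρ P τ pp cp (true :: pos))
        + hSum (fun pos => pm ρ P τ pp cp (false :: pos))) :=
  hSum_listBool _

theorem gmod_of_dest_null {g : ProcAr B V .null → Proc B V}
    (hd : PFunctor.M.dest P = ⟨.null, g⟩) : gmod ρ P τ pp cp = 0 := by
  rw [gmod_eq_add]
  simp only [pm, hd, hSum_zero, add_zero]

theorem gmod_of_dest_pre {b : B} {v : V} {k : V → Proc B V}
    (hd : PFunctor.M.dest P = ⟨.pre b v, k⟩) :
    gmod ρ P τ pp cp = Heap.single (.bio b pp v (ρ τ b v) (cp ++ [true]))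
      + gmod ρ (k (ρ τ b v)) (τ ++ [(b, v, ρ τ b v)]) (cp ++ [true]) (cp ++ [true]) := by
  rw [gmod_eq_add]
  simp only [pm, hd, hSum_zero, add_zero]
  rfl

theorem gmod_of_dest_choice {f : Bool → Proc B V} (hd : PFunctor.M.dest P = ⟨.choice, f⟩) :
    gmod ρ P τ pp cp
      = gmod ρ (f true) τ pp (cp ++ [true]) + gmod ρ (f false) τ pp (cp ++ [false]) := by
  rw [gmod_eq_add]
  simp only [pm, hd, zero_add]
  rfl

theorem pm_apply_ne_zero {pos : List Bool} {c : Chunk B V (List Bool)}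
    (hc : pm ρ P τ pp cp pos c ≠ 0) :
    ∃ b v w s, c = .bio b s v w (cp ++ pos ++ [true]) ∧
      ((s = pp ∧ w = ρ τ b v ∧ ∃ Q k, ChoicePath P pos Q ∧ PFunctor.M.dest Q = ⟨.pre b v, k⟩)
        ∨ ∃ q ≠ [], s = cp ++ q) := by
  induction pos generalizing P τ pp cp with
  | nil =>
    rcases hP : PFunctor.M.dest P with ⟨_ | ⟨b, v⟩ | _, k⟩ <;> simp only [pm, hP] at hc
    · exact hc.elim rfl
    · obtain rfl : c = .bio b pp v (ρ τ b v) (cp ++ [true]) := by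
        by_contra hne
        exact hc (Heap.single_apply_of_ne hne)
      exact ⟨b, v, _, pp, by simp, Or.inl ⟨rfl, rfl, P, k, .nil P, hP⟩⟩
    · exact hc.elim rfl
  | cons d pos ih =>
    rcases hP : PFunctor.M.dest P with ⟨_ | ⟨b, v⟩ | _, k⟩ <;> cases d <;>
      simp only [pm, hP] at hc
    any_goals exact hc.elim rfl
    · obtain ⟨b', v', w', s, rfl, hsrc⟩ := ih hc
      refine ⟨b', v', w', s, by simp, Or.inr ?_⟩
      rcases hsrc with ⟨rfl, -⟩ | ⟨q, -, rfl⟩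
      · exact ⟨[true], by simp, rfl⟩
      · exact ⟨true :: q, by simp, by simp⟩
    all_goals
      obtain ⟨b', v', w', s, rfl, hsrc⟩ := ih hc
      refine ⟨b', v', w', s, by simp, ?_⟩
      rcases hsrc with ⟨rfl, hw, Q, k', hpath, hQ⟩ | ⟨q, hq, rfl⟩
      · exact Or.inl ⟨rfl, hw, Q, k', .cons hP hpath, hQ⟩
      · exact Or.inr ⟨_, by simp, List.append_assoc _ _ _⟩

theorem gmod_apply_token (x : List Bool) : gmod ρ P τ pp cp (.token x) = 0 :=
  hSum_apply_eq_zero_iff.2 fun _ => by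
    by_contra h
    obtain ⟨_, _, _, _, hc, -⟩ := pm_apply_ne_zero h
    cases hc

theorem gmod_src {b : B} {s : List Bool} {v w : V} {t' : List Bool}
    (h : 0 < gmod ρ P τ pp cp (.bio b s v w t')) : s = pp ∨ cp <+: s := by
  obtain ⟨pos, hpos⟩ := exists_pos_of_hSum_apply_pos h
  obtain ⟨_, _, _, _, hc, hsrc⟩ := pm_apply_ne_zero hpos.ne'
  cases hc
  rcases hsrc with ⟨rfl, -⟩ | ⟨q, -, rfl⟩
  · exact Or.inl rfl
  · exact Or.inr (List.prefix_append _ _)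

theorem deadFor_gmod {p : List Bool} (hpp : pp.length < p.length) (hcp : ∀ q, ¬ p <+: cp ++ q) :
    deadFor p (gmod ρ P τ pp cp) := by
  refine ⟨fun _ => gmod_apply_token _, fun s ⟨b, v, w, t', hpos⟩ hs => ?_⟩
  rcases gmod_src hpos with rfl | ⟨q, rfl⟩
  · exact absurd hs.length_le (not_le.2 hpp)
  · exact hcp q hs

/-- `dead` collects the permissions of the branches not taken. -/
theorem ChoicePath.gmod_eq {Q : Proc B V} {pos : List Bool} {b : B} {v : V}
    {k : V → Proc B V} (hpath : ChoicePath P pos Q) (hQ : PFunctor.M.dest Q = ⟨.pre b v, k⟩)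
    (hpp : pp.length ≤ cp.length) :
    ∃ dead, deadFor (cp ++ pos ++ [true]) dead ∧
      gmod ρ P τ pp cp = Heap.single (.bio b pp v (ρ τ b v) (cp ++ pos ++ [true]))
        + gmod ρ (k (ρ τ b v)) (τ ++ [(b, v, ρ τ b v)]) (cp ++ pos ++ [true])
            (cp ++ pos ++ [true]) + dead := by
  induction hpath generalizing cp with
  | nil => exact ⟨0, deadFor_zero _, by rw [gmod_of_dest_pre hQ, List.append_nil, add_zero]⟩
  | @cons P _ f d pos hd _ ih =>
    obtain ⟨dead, hdead, heq⟩ := ih hQ (cp := cp ++ [d]) (by simp; omega)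
    simp only [List.append_assoc, List.cons_append, List.nil_append] at hdead heq ⊢
    have hother : deadFor (cp ++ d :: (pos ++ [true])) (gmod ρ (f !d) τ pp (cp ++ [!d])) := by
      refine deadFor_gmod (by simp; omega) fun q hq => ?_
      rw [List.append_assoc, List.prefix_append_right_inj, List.singleton_append,
        List.cons_prefix_cons] at hq
      cases d <;> simp at hq
    refine ⟨dead + gmod ρ (f !d) τ pp (cp ++ [!d]), hdead.add hother, ?_⟩
    rw [gmod_of_dest_choice hd]
    cases d <;> simp only [Bool.not_true, Bool.not_false, heq] <;> abel

inductive CanonicalSat (Ty : B → V → Set V) (ρ : List (B × V × V) → B → V → V) :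
    Heap B V (List Bool) → Assn B V (List Bool) → Prop
  | proc (P : Proc B V) (τ pp cp) : CanonicalSat Ty ρ (gmod ρ P τ pp cp) (embA P pp)
  | ex1 {P : Proc B V} {b : B} {v : V} {k : V → Proc B V} (τ pp cp)
      (hd : PFunctor.M.dest P = ⟨.pre b v, k⟩) :
      CanonicalSat Ty ρ (gmod ρ P τ pp cp)
        (PFunctor.M.corec embStep (EmbSt.ex1 b v k pp (cp ++ [true])))
  | star1 {P : Proc B V} {b : B} {v : V} {k : V → Proc B V} (τ pp cp)
      (hd : PFunctor.M.dest P = ⟨.pre b v, k⟩) :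
      CanonicalSat Ty ρ (gmod ρ P τ pp cp)
        (PFunctor.M.corec embStep (EmbSt.star1 b v k pp (cp ++ [true]) (ρ τ b v)))
  | chunk {c φ} (hc : c.wellTyped Ty)
      (hd : PFunctor.M.dest φ = ⟨AssnHead.chunk c, fun e : Empty => e.elim⟩) :
      CanonicalSat Ty ρ (Heap.single c) φ
  | tokenStar (P : Proc B V) :
      CanonicalSat Ty ρ (Heap.single (.token []) + cmod ρ P)
        (Assn.star (Assn.mkChunk (.token [])) (embA P []))
  | procAssn (P : Proc B V) :
      CanonicalSat Ty ρ (Heap.single (.token []) + cmod ρ P) (procAssn (List Bool) P)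

theorem CanonicalSat.satF (hρ : schedWT Ty ρ) {h : Heap B V (List Bool)}
    {φ : Assn B V (List Bool)} (hφ : CanonicalSat Ty ρ h φ) : SatF Ty (CanonicalSat Ty ρ) h φ := by
  unfold SatF
  cases hφ with
  | proc P τ pp cp =>
    rcases hP : PFunctor.M.dest P with ⟨_ | _ | _, f⟩
    · rw [dest_embA_null hP]
    · rw [dest_embA_pre hP]
      exact ⟨cp ++ [true], .ex1 τ pp cp hP⟩
    · rw [dest_embA_choice hP]
      exact ⟨_, _, gmod_of_dest_choice hP, .proc _ τ pp _, .proc _ τ pp _⟩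
  | ex1 τ pp cp hd =>
    rw [dest_corec_embStep_ex1]
    exact ⟨_, .star1 τ pp cp hd⟩
  | star1 τ pp cp hd =>
    rw [dest_corec_embStep_star1]
    exact ⟨_, _, gmod_of_dest_pre hd, .chunk (hρ τ _ _) dest_corec_embStep_leafChunk,
      .proc _ _ _ _⟩
  | chunk hc hd =>
    rw [hd]
    exact ⟨by simp, hc⟩
  | tokenStar P =>
    rw [dest_star]
    exact ⟨_, _, rfl, .chunk trivial (dest_mkChunk _), .proc P [] [] []⟩
  | procAssn P =>
    rw [dest_procAssn]
    exact ⟨[], .tokenStar P⟩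

theorem sat_cmod (hρ : schedWT Ty ρ) (P : Proc B V) :
    sat Ty (Heap.single (.token []) + cmod ρ P) (procAssn (List Bool) P) :=
  ⟨CanonicalSat Ty ρ, fun _ _ => CanonicalSat.satF hρ, .procAssn P⟩

end CanonicalModel

section Completeness

variable {B V : Type} {Ty : B → V → Set V} {ρ : List (B × V × V) → B → V → V}

theorem HTrans.output_mem {Pl : Type} {o o' : Option (Heap B V Pl)} {a : B × V × V}
    (h : HTrans Ty o a o') : a.2.2 ∈ Ty a.1 a.2.1 := by
  cases h with
  | bio hw => exact hw
  | contradict _ _ hw' => exact hw'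
  | chaos hw => exact hw

theorem output_mem_of_mem_hES_tracesFrom {Pl : Type} {o : Option (Heap B V Pl)}
    {τ : List (B × V × V)} (hτ : τ ∈ (hES Ty).tracesFrom o) : ∀ a ∈ τ, a.2.2 ∈ Ty a.1 a.2.1 := by
  induction τ generalizing o with
  | nil => simp
  | cons a τ ih =>
    obtain ⟨o', ho, hτ'⟩ := ES.cons_mem_tracesFrom.1 hτ
    exact List.forall_mem_cons.2 ⟨HTrans.output_mem ho, ih hτ'⟩

theorem rhoWit_eq (pick : B → V → V) {σ τ₁ τ₂ : List (B × V × V)} {b : B} {v w : V}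
    (hσ : σ = τ₁ ++ (b, v, w) :: τ₂) : rhoWit pick σ τ₁ b v = w := by
  have hdrop : σ.drop τ₁.length = (b, v, w) :: τ₂ := by simp [hσ]
  have hex : ∃ w' τ₂', τ₁ <+: σ ∧ σ.drop τ₁.length = (b, v, w') :: τ₂' :=
    ⟨w, τ₂, ⟨_, hσ.symm⟩, hdrop⟩
  rw [rhoWit, dif_pos hex]
  obtain ⟨_, -, hdrop'⟩ := hex.choose_spec
  have := hdrop.symm.trans hdrop'
  simp only [List.cons.injEq, Prod.mk.injEq] at this
  exact this.1.2.2.symm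

theorem schedWT_rhoWit {pick : B → V → V} (hpick : ∀ b v, pick b v ∈ Ty b v)
    {σ : List (B × V × V)} (hσ : ∀ a ∈ σ, a.2.2 ∈ Ty a.1 a.2.1) :
    schedWT Ty (rhoWit pick σ) := by
  intro τ b v
  unfold rhoWit
  split_ifs with hex
  · obtain ⟨_, -, hdrop⟩ := hex.choose_spec
    exact hσ _ (List.mem_of_mem_drop (hdrop ▸ List.mem_cons_self))
  · exact hpick b v

theorem canonical_eq_token_add_bio {P : Proc B V} {τ : List (B × V × V)}
    {t t₀ t₁ : List Bool} {junk fr : Heap B V (List Bool)} {b : B} {v w : V}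
    (hjunk : deadFor t junk)
    (heq : Heap.single (.token t) + gmod ρ P τ t t + junk
      = Heap.single (.token t₀) + Heap.single (.bio b t₀ v w t₁) + fr) :
    t₀ = t ∧ w = ρ τ b v ∧ ∃ pos Q k, ChoicePath P pos Q ∧
      PFunctor.M.dest Q = ⟨.pre b v, k⟩ ∧ t₁ = t ++ pos ++ [true] := by
  obtain rfl : t₀ = t := by
    by_contra hne
    have h := congrFun heq (.token t₀)
    simp [Heap.single_apply_of_ne, gmod_apply_token, hjunk.1, hne] at h
    exact one_ne_zero (add_eq_zero.1 h.symm).1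
  have hjunk_bio : junk (.bio b t₀ v w t₁) = 0 := by
    by_contra hj
    exact hjunk.2 t₀ ⟨b, v, w, t₁, pos_iff_ne_zero.2 hj⟩ List.prefix_rfl
  have hgmod : 0 < gmod ρ P τ t₀ t₀ (.bio b t₀ v w t₁) := by
    have h := congrFun heq (.bio b t₀ v w t₁)
    simp [Heap.single_apply_of_ne, hjunk_bio] at h
    simp [h]
  obtain ⟨pos, hpm⟩ := exists_pos_of_hSum_apply_pos hgmod
  obtain ⟨_, _, _, _, hc, hsrc⟩ := pm_apply_ne_zero hpm.ne'
  obtain ⟨rfl, rfl, rfl, rfl, rfl⟩ := by simpa using hc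
  rcases hsrc with ⟨-, hw, Q, k, hpath, hQ⟩ | ⟨q, hq, hs⟩
  · exact ⟨rfl, hw, pos, Q, k, hpath, hQ, by simp⟩
  · exact absurd (by simpa using hs) hq

theorem htrans_canonical {P : Proc B V} {τ : List (B × V × V)} {t : List Bool}
    {junk : Heap B V (List Bool)} (hjunk : deadFor t junk) {a : B × V × V}
    {o : Option (Heap B V (List Bool))}
    (h : HTrans Ty (some (Heap.single (.token t) + gmod ρ P τ t t + junk)) a o)
    (hρ : ρ τ a.1 a.2.1 = a.2.2) :
    ∃ P' t' junk', PTrans Ty P a P' ∧ deadFor t' junk' ∧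
      o = some (Heap.single (.token t') + gmod ρ P' (τ ++ [a]) t' t' + junk') := by
  generalize hH : some (Heap.single (.token t) + gmod ρ P τ t t + junk) = H at h
  cases h with
  | @bio b v w t₀ t₁ fr hw =>
    obtain ⟨rfl, rfl, pos, Q, k, hpath, hQ, rfl⟩ :=
      canonical_eq_token_add_bio hjunk (Option.some.inj hH)
    obtain ⟨dead, hdead, hgmod⟩ := hpath.gmod_eq (ρ := ρ) (τ := τ) hQ le_rfl
    refine ⟨_, _, dead + junk, hpath.ptrans hQ hw,
      hdead.add (hjunk.of_prefix (List.prefix_append_of_prefix (List.prefix_append _ _))), ?_⟩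
    have hfr : fr = gmod ρ (k (ρ τ b v)) (τ ++ [(b, v, ρ τ b v)]) (t₀ ++ pos ++ [true])
        (t₀ ++ pos ++ [true]) + (dead + junk) :=
      Heap.single_add_single_add_left_cancel (by rw [← Option.some.inj hH, hgmod]; abel)
    rw [hfr, add_assoc]
  | @contradict b v w w' t₀ t₁ fr hne =>
    -- the permission carries the input `ρ τ b v`, which is the one the trace demands
    obtain ⟨-, rfl, -⟩ := canonical_eq_token_add_bio hjunk (Option.some.inj hH)
    exact absurd hρ hne
  | chaos => cases hH

theorem mem_pES_tracesFrom_of_canonical {σ τdone τrem : List (B × V × V)}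
    (hσ : σ = τdone ++ τrem) (hρ : ∀ τ₁ a τ₂, σ = τ₁ ++ a :: τ₂ → ρ τ₁ a.1 a.2.1 = a.2.2)
    {P : Proc B V} {t : List Bool} {junk : Heap B V (List Bool)} (hjunk : deadFor t junk)
    (hrun : τrem ∈ (hES Ty).tracesFrom
      (some (Heap.single (.token t) + gmod ρ P τdone t t + junk))) :
    τrem ∈ (pES Ty).tracesFrom P := by
  induction τrem generalizing τdone P t junk with
  | nil => exact ES.nil_mem_tracesFrom P
  | cons a τrem ih =>
    obtain ⟨o, ho, hrun'⟩ := ES.cons_mem_tracesFrom.1 hrun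
    obtain ⟨P', t', junk', hP, hjunk', rfl⟩ := htrans_canonical hjunk ho (hρ _ _ _ hσ)
    exact ES.cons_mem_tracesFrom.2 ⟨P', hP, ih (by simp [hσ]) hjunk' hrun'⟩

theorem tracesHA_subset_pES_tracesFrom (hne : ∀ b v, (Ty b v).Nonempty) (P : Proc B V) :
    tracesHA Ty (procAssn (List Bool) P) ⊆ (pES Ty).tracesFrom P := by
  intro τ hτ
  choose pick hpick using hne
  -- `rhoWit pick τ` is a well-typed schedule only once `τ` is known to be well-typed
  have htyped := output_mem_of_mem_hES_tracesFrom (hτ _ (sat_cmod (ρ := fun _ => pick)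
    (fun _ => hpick) P))
  have hrun := hτ _ (sat_cmod (schedWT_rhoWit hpick htyped) P)
  refine mem_pES_tracesFrom_of_canonical (τdone := []) rfl (fun _ _ _ => rhoWit_eq pick)
    (deadFor_zero []) ?_
  simpa [cmod] using hrun

theorem pES_tracesFrom_eq_tracesHA (hne : ∀ b v, (Ty b v).Nonempty) (P : Proc B V) :
    (pES Ty).tracesFrom P = tracesHA Ty (procAssn (List Bool) P) :=
  (pES_tracesFrom_subset_tracesHA P).antisymm (tracesHA_subset_pES_tracesFrom hne P)

end Completeness

section Translation

variable {B V S : Type} {Ty : B → V → Set V} {e : ℕ → B × V} {G : IOGES B V S}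

open Classical in
noncomputable def procOfStep (e : ℕ → B × V) (G : IOGES B V S) :
    PrSt S → (ProcF B V).Obj (PrSt S)
  | .spine n s => ⟨.choice, fun x : Bool => if x then .item n s else .spine (n + 1) s⟩
  | .item n s =>
      if G.guard (e n).1 (e n).2 s then
        ⟨.pre (e n).1 (e n).2, fun w => .spine 0 (G.update (e n).1 (e n).2 w s)⟩
      else ⟨.null, fun x => x.elim⟩

/-- The choice over the I/O actions `e m`, `m ≥ n`, whose guards hold in `s`. -/
noncomputable def procSpine (e : ℕ → B × V) (G : IOGES B V S) (n : ℕ) (s : S) : Proc B V :=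
  PFunctor.M.corec (procOfStep e G) (.spine n s)

noncomputable def procItem (e : ℕ → B × V) (G : IOGES B V S) (n : ℕ) (s : S) : Proc B V :=
  PFunctor.M.corec (procOfStep e G) (.item n s)

theorem procOf_eq_procSpine (s : S) : procOf e G s = procSpine e G 0 s := rfl

theorem dest_procSpine (n : ℕ) (s : S) :
    PFunctor.M.dest (procSpine e G n s)
      = ⟨.choice, fun d : Bool => if d then procItem e G n s else procSpine e G (n + 1) s⟩ := by
  rw [procSpine, PFunctor.M.dest_corec]
  exact congrArg (Sigma.mk _) (funext fun d => by cases d <;> rfl)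

theorem dest_procItem_of_guard {n : ℕ} {s : S} (hg : G.guard (e n).1 (e n).2 s) :
    PFunctor.M.dest (procItem e G n s)
      = ⟨.pre (e n).1 (e n).2, fun w => procOf e G (G.update (e n).1 (e n).2 w s)⟩ := by
  rw [procItem, PFunctor.M.dest_corec]
  simp only [procOfStep, hg, ↓reduceIte]
  rfl

theorem dest_procItem_of_not_guard {n : ℕ} {s : S} (hg : ¬ G.guard (e n).1 (e n).2 s) :
    PFunctor.M.dest (procItem e G n s) = ⟨.null, fun x : Empty => x.elim⟩ := by
  rw [procItem, PFunctor.M.dest_corec]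
  simp only [procOfStep, hg, ↓reduceIte]
  exact congrArg (Sigma.mk _) (funext fun x : Empty => x.elim)

theorem PTrans.exists_procItem_of_procSpine {n : ℕ} {s : S} {a : B × V × V} {P' : Proc B V}
    (h : PTrans Ty (procSpine e G n s) a P') : ∃ m, PTrans Ty (procItem e G m s) a P' := by
  generalize hP : procSpine e G n s = P at h
  induction h generalizing n with
  | pref _ hd =>
    rw [← hP, dest_procSpine] at hd
    cases congrArg Sigma.fst hd
  | chl hd h _ =>
    rw [← hP, dest_procSpine] at hd
    obtain ⟨-, ⟨⟩⟩ := Sigma.mk.inj_iff.1 hd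
    exact ⟨n, h⟩
  | chr hd _ ih =>
    rw [← hP, dest_procSpine] at hd
    obtain ⟨-, ⟨⟩⟩ := Sigma.mk.inj_iff.1 hd
    exact ih rfl

theorem PTrans.procSpine_of_procItem {m n : ℕ} (hnm : n ≤ m) {s : S} {a : B × V × V}
    {P' : Proc B V} (h : PTrans Ty (procItem e G m s) a P') :
    PTrans Ty (procSpine e G n s) a P' := by
  induction hnm using Nat.decreasingInduction with
  | self => exact PTrans.chl (dest_procSpine m s) h
  | of_succ n _ ih => exact PTrans.chr (dest_procSpine n s) ih

theorem ptrans_procOf_iff (he : Function.Surjective e) {s : S} {b : B} {v w : V}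
    {P' : Proc B V} :
    PTrans Ty (procOf e G s) (b, v, w) P' ↔
      G.guard b v s ∧ w ∈ Ty b v ∧ P' = procOf e G (G.update b v w s) := by
  constructor
  · intro h
    obtain ⟨m, hm⟩ := PTrans.exists_procItem_of_procSpine h
    by_cases hg : G.guard (e m).1 (e m).2 s
    · obtain ⟨w', heq, hw, rfl⟩ := hm.of_dest_pre (dest_procItem_of_guard hg)
      obtain ⟨rfl, rfl, rfl⟩ := by simpa using heq
      exact ⟨hg, hw, rfl⟩
    · exact absurd hm (PTrans.not_of_dest_null (dest_procItem_of_not_guard hg))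
  · rintro ⟨hg, hw, rfl⟩
    obtain ⟨n, hn⟩ := he (b, v)
    obtain rfl : b = (e n).1 := by rw [hn]
    obtain rfl : v = (e n).2 := by rw [hn]
    exact PTrans.procSpine_of_procItem (Nat.zero_le n)
      (PTrans.pref hw (dest_procItem_of_guard hg))

theorem IOGES.tracesFrom_es_eq_tracesFrom_procOf (he : Function.Surjective e) (G : IOGES B V S) (s : S) :
    (G.es Ty).tracesFrom s = (pES Ty).tracesFrom (procOf e G s) := by
  refine Set.Subset.antisymm
    (ES.tracesFrom_subset_of_simulation (fun s P => P = procOf e G s) ?_ rfl)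
    (ES.tracesFrom_subset_of_simulation (fun P s => P = procOf e G s) ?_ rfl)
  · rintro s _ ⟨b, v, w⟩ _ rfl ⟨hg, hw, rfl⟩
    exact ⟨_, (ptrans_procOf_iff he).2 ⟨hg, hw, rfl⟩, rfl⟩
  · rintro _ s ⟨b, v, w⟩ _ rfl h
    obtain ⟨hg, hw, rfl⟩ := (ptrans_procOf_iff he).1 h
    exact ⟨_, ⟨hg, hw, rfl⟩, rfl⟩

end Translation

/-- Combined translation correctness: for every I/O-guarded event system `G`
and state `s`, `traces(G, s) = tracesH(emb(proc(G, s)))`, i.e. the event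
system, its process translation, and the derived separation-logic I/O
specification all have exactly the same trace sets. -/
theorem ioges_iospec_trace_equiv {B V S : Type} (Ty : B → V → Set V)
    (hne : ∀ b v, (Ty b v).Nonempty)
    (e : ℕ → B × V) (he : Function.Surjective e) (G : IOGES B V S) (s : S) :
    (G.es Ty).tracesFrom s = (pES Ty).tracesFrom (procOf e G s) ∧
    (G.es Ty).tracesFrom s = tracesHA Ty (procAssn (List Bool) (procOf e G s)) := by
  have hproc := IOGES.tracesFrom_es_eq_tracesFrom_procOf (Ty := Ty) he G s
  exact ⟨hproc, hproc.trans (pES_tracesFrom_eq_tracesHA hne _)⟩
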